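/- arXiv:1512.07063 — 4 statements merged into one kernel-verified Lean document; each statement's English description precedes it below -/
import Mathlib

section
/- Assume I is an ideal on κ, f̄ = ⟨f_α : α < δ⟩ is <_I-increasing with f_α ∈ ^κOrd, J ⊇ I is an ideal on κ, and s̄ = ⟨s_i : i < κ⟩ witnesses that f̄ is (<σ)-chaotic for J. Then f̄ has no ≤_I-exact upper bound f such that the complement of {i < κ : cf(f(i)) ≥ σ} belongs to J (i.e. such that cf(f(i)) ≥ σ holds J-almost everywhere). -/
open Cardinal Set

/-- `I` is a (proper) ideal on the index set `ι`. -/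
def IsIdealOn {ι : Type} (I : Set (Set ι)) : Prop :=
  ∅ ∈ I ∧ (∀ s t : Set ι, s ⊆ t → t ∈ I → s ∈ I) ∧
    (∀ s t : Set ι, s ∈ I → t ∈ I → s ∪ t ∈ I) ∧ Set.univ ∉ I

/-- `f ≤_I g` : the set where `f` exceeds `g` is in the ideal. -/
def leMod {ι : Type} (I : Set (Set ι)) (f g : ι → Ordinal) : Prop :=
  {i | g i < f i} ∈ I

/-- `f <_I g` : the set where `f ≥ g` is in the ideal. -/
def ltMod {ι : Type} (I : Set (Set ι)) (f g : ι → Ordinal) : Prop :=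
  {i | g i ≤ f i} ∈ I

/-- Auxiliary: a set of ordinals of cardinality less than the cofinality of `o`,
all of whose members are below `o`, has supremum below `o`. -/
lemma sSup_lt_of_small_card {S : Set Ordinal} {o : Ordinal}
    (h1 : #S < Cardinal.lift.{1,0} o.cof) (h2 : ∀ x ∈ S, x < o) :
    sSup S < o := by
  have ho : 0 < o := by
    rcases eq_zero_or_pos o with rfl | h
    · rw [Ordinal.cof_zero, Cardinal.lift_zero] at h1
      exact absurd h1 (by simp)
    · exact h
  haveI : Small.{0} S := small_subset (show S ⊆ Iio o from fun x hx => h2 x hx)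
  rcases S.eq_empty_or_nonempty with rfl | hSne
  · simpa [csSup_empty, Ordinal.bot_eq_zero] using ho
  have hR : Set.range (fun j : Shrink.{0} S => ((equivShrink S).symm j : Ordinal)) = S := by
    ext x
    constructor
    · rintro ⟨j, rfl⟩; exact ((equivShrink S).symm j).2
    · intro hx; exact ⟨equivShrink S ⟨x, hx⟩, by simp⟩
  have hS : sSup S = ⨆ j : Shrink.{0} S, ((equivShrink S).symm j : Ordinal) :=
    (congrArg sSup hR).symm
  rw [hS]
  apply Ordinal.iSup_lt_ord
  · have hm : Cardinal.lift.{1} #(Shrink.{0} ↥S) = #↥S := Cardinal.lift_mk_shrink'' ↥S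
    rw [← hm] at h1
    exact Cardinal.lift_lt.1 h1
  · exact fun j => h2 _ ((equivShrink S).symm j).2

/-- if `s̄` witnesses that the `<_I`-increasing sequence `f̄` is
`(<σ)`-chaotic for `J ⊇ I`, then `f̄` has no `≤_I`-exact upper bound `f`
with `cf(f(i)) ≥ σ` holding `J`-almost everywhere. -/
theorem no_eub_of_chaotic {ι : Type} (I J : Set (Set ι))
    (hI : IsIdealOn I) (hJ : IsIdealOn J) (hIJ : I ⊆ J)
    (δ : Ordinal) (σ : Cardinal.{0}) (F : Ordinal → ι → Ordinal)
    (hinc : ∀ α β, α < β → β < δ → ltMod I (F α) (F β))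
    (s : ι → Set Ordinal)
    (hne : ∀ i, (s i).Nonempty)
    (hsize : ∀ i, #(s i) < Cardinal.lift.{1,0} σ)
    (hwit : ∀ α < δ, ∃ β, α < β ∧ β < δ ∧ ∃ g : ι → Ordinal,
      (∀ i, g i ∈ s i) ∧ leMod J (F α) g ∧ leMod J g (F β)) :
    ¬ ∃ f : ι → Ordinal,
      ((∀ α < δ, leMod I (F α) f) ∧
        (∀ f' : ι → Ordinal, ltMod I f' (fun i => max (f i) 1) →
          ∃ α < δ, ltMod I f' (fun i => max (F α i) 1))) ∧
      {i | ¬ σ ≤ (f i).cof} ∈ J := by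
  rintro ⟨f, ⟨heub1, heub2⟩, hcf⟩
  -- the index type is nonempty
  have hιne : Nonempty ι := by
    by_contra h
    exact hI.2.2.2 (by rw [Set.univ_eq_empty_iff.2 (not_nonempty_iff.1 h)]; exact hI.1)
  -- σ > 1
  have hσ1 : (1 : Cardinal) < σ := by
    obtain ⟨i0⟩ := hιne
    have h1 : (1 : Cardinal.{1}) ≤ #(s i0) :=
      Cardinal.one_le_iff_ne_zero.2 (Cardinal.mk_ne_zero_iff.2 (hne i0).to_subtype)
    have h2 := h1.trans_lt (hsize i0)
    rw [show (1 : Cardinal.{1}) = Cardinal.lift.{1,0} 1 from (Cardinal.lift_one).symm] at h2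
    exact Cardinal.lift_lt.1 h2
  -- wherever the cofinality is at least σ, the value is a limit ordinal
  have hlim : ∀ i, σ ≤ (f i).cof → Order.IsSuccLimit (f i) := by
    intro i h
    have h2 : 1 < (f i).cof := lt_of_lt_of_le hσ1 h
    rcases Ordinal.zero_or_succ_or_isSuccLimit (f i) with h0 | ⟨a, ha⟩ | hl
    · rw [h0, Ordinal.cof_zero] at h2; exact absurd h2 (by simp)
    · rw [← ha, Ordinal.cof_succ] at h2; exact absurd h2 (lt_irrefl 1)
    · exact hl
  -- the diagonal function
  set f' : ι → Ordinal := fun i =>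
    if σ ≤ (f i).cof then sSup ((fun ξ => ξ + 1) '' {ξ | ξ ∈ s i ∧ ξ < f i}) else 0 with hf'
  have key1 : ∀ i, σ ≤ (f i).cof → f' i < f i := by
    intro i h
    have hl := hlim i h
    simp only [hf', if_pos h]
    apply sSup_lt_of_small_card
    · calc #((fun ξ => ξ + 1) '' {ξ | ξ ∈ s i ∧ ξ < f i})
          ≤ #{ξ | ξ ∈ s i ∧ ξ < f i} := Cardinal.mk_image_le
        _ ≤ #(s i) := Cardinal.mk_le_mk_of_subset (fun ξ hξ => hξ.1)
        _ < Cardinal.lift.{1,0} σ := hsize i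
        _ ≤ Cardinal.lift.{1,0} (f i).cof := Cardinal.lift_le.2 h
    · rintro x ⟨ξ, ⟨_, hξ2⟩, rfl⟩
      show ξ + 1 < f i
      rw [Ordinal.add_one_eq_succ]
      exact hl.succ_lt hξ2
  have hlt : ltMod I f' (fun i => max (f i) 1) := by
    have hemp : {i | max (f i) 1 ≤ f' i} = ∅ := by
      ext i
      simp only [mem_setOf_eq, mem_empty_iff_false, iff_false, not_le]
      by_cases h : σ ≤ (f i).cof
      · exact (key1 i h).trans_le (le_max_left _ _)
      · simp only [hf', if_neg h]
        exact lt_of_lt_of_le zero_lt_one (le_max_right _ _)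
    rw [ltMod, hemp]; exact hI.1
  obtain ⟨α, hαδ, hα⟩ := heub2 f' hlt
  obtain ⟨β, hαβ, hβδ, g, hg, hg1, hg2⟩ := hwit α hαδ
  obtain ⟨γ, hβγ, hγδ, -⟩ := hwit β hβδ
  -- a point avoiding all the relevant small sets
  set U := {i | ¬ σ ≤ (f i).cof} ∪ {i | max (F α i) 1 ≤ f' i} ∪ {i | g i < F α i} ∪
      {i | F β i < g i} ∪ {i | F γ i ≤ F β i} ∪ {i | f i < F γ i} with hU_def
  have hU : U ∈ J := by
    apply hJ.2.2.1
    apply hJ.2.2.1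
    apply hJ.2.2.1
    apply hJ.2.2.1
    apply hJ.2.2.1
    · exact hcf
    · exact hIJ hα
    · exact hg1
    · exact hg2
    · exact hIJ (hinc β γ hβγ hγδ)
    · exact hIJ (heub1 γ hγδ)
  have hex : ∃ i, i ∉ U := by
    by_contra h
    push_neg at h
    exact hJ.2.2.2 (hJ.2.1 Set.univ U (fun i _ => h i) hU)
  obtain ⟨i, hi⟩ := hex
  simp only [hU_def, Set.mem_union, mem_setOf_eq, not_or, not_lt, not_le, not_not] at hi
  obtain ⟨⟨⟨⟨⟨hA, hB⟩, hC⟩, hD⟩, hE⟩, hF⟩ := hi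
  -- hA : σ ≤ (f i).cof ; hB : f' i < max (F α i) 1 ; hC : F α i ≤ g i
  -- hD : g i ≤ F β i ; hE : F β i < F γ i ; hF : F γ i ≤ f i
  have hgfi : g i < f i := lt_of_le_of_lt hD (lt_of_lt_of_le hE hF)
  have hmem : g i + 1 ∈ (fun ξ => ξ + 1) '' {ξ | ξ ∈ s i ∧ ξ < f i} :=
    ⟨g i, ⟨hg i, hgfi⟩, rfl⟩
  have hbdd : BddAbove ((fun ξ => ξ + 1) '' {ξ | ξ ∈ s i ∧ ξ < f i}) := by
    refine ⟨f i, ?_⟩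
    rintro x ⟨ξ, ⟨_, hξ2⟩, rfl⟩
    show ξ + 1 ≤ f i
    rw [Ordinal.add_one_eq_succ]
    exact ((hlim i hA).succ_lt hξ2).le
  have hle : g i + 1 ≤ f' i := by
    simp only [hf', if_pos hA]
    exact le_csSup hbdd hmem
  have hmax : max (F α i) 1 ≤ g i + 1 :=
    max_le (hC.trans le_self_add) le_add_self
  exact absurd (hmax.trans hle) (not_le.2 hB)
end

section
/- Suppose cf(δ) > κ⁺, I is an ideal on κ, and ⟨f_α : α < δ⟩ is a ≤_I-increasing sequence of functions in ^κOrd. If moreover cf(δ) > 2^κ, then ⟨f_α : α < δ⟩ has a ≤_I-least upper bound. -/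
open Cardinal Set

/-!
Suppose there is no least upper bound, so that every upper bound `W` has an upper bound
`next W` with `¬ W ≤_I next W`. Build functions `g_ξ`, starting from the pointwise supremum
`g_0`. At a stage `ξ > 0`, cover each `f_α` by taking at every `i` the least value
`g_ζ(i) ≥ f_α(i)` with `ζ < ξ`. For `ξ < κ⁺` these covers are `≤_I`-increasing in `α` and take
at most `|ξ|^κ ≤ 2^κ < cf δ` values, so some value `W_ξ` recurs cofinally; it is an upper bound,
and we put `g_ξ = next W_ξ`. For each `α` the covers are eventually constant below `κ⁺`, and as
`κ⁺ < cf δ` a single `ρ < κ⁺` bounds the stabilisation point for cofinally many `α`. Put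
`σ = ρ + 1` and pick such an `α = β` above an index where `W_σ` occurs. The cover of `f_β` at
stage `σ` already equals the one at stage `κ⁺`, which takes `g_σ` into account; hence
`W_σ ≤_I cover_σ(f_β) ≤_I g_σ = next W_σ`, a contradiction.

For finite `κ` the ideal is principal and the pointwise supremum is the least upper bound.
-/

universe u v

namespace IsIdealOn

variable {ι : Type} {I : Set (Set ι)}

theorem empty_mem (hI : IsIdealOn I) : ∅ ∈ I := hI.1

theorem mono (hI : IsIdealOn I) {s t : Set ι} (hst : s ⊆ t) (ht : t ∈ I) : s ∈ I :=
  hI.2.1 s t hst ht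

theorem union_mem (hI : IsIdealOn I) {s t : Set ι} (hs : s ∈ I) (ht : t ∈ I) : s ∪ t ∈ I :=
  hI.2.2.1 s t hs ht

theorem exists_greatest [Finite ι] (hI : IsIdealOn I) : ∃ a ∈ I, ∀ t ∈ I, t ⊆ a := by
  obtain ⟨a, ha⟩ := (Set.toFinite I).exists_maximal ⟨∅, hI.empty_mem⟩
  exact ⟨a, ha.1, fun t ht =>
    subset_union_right.trans (ha.2 (hI.union_mem ha.1 ht) subset_union_left)⟩

end IsIdealOn

section leMod

variable {ι : Type} {I : Set (Set ι)} {f g h : ι → Ordinal.{u}}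

theorem leMod_of_le_outside (hI : IsIdealOn I) {s : Set ι} (hs : s ∈ I)
    (hfg : ∀ i ∉ s, f i ≤ g i) : leMod I f g :=
  hI.mono (fun i hi => by_contra fun his => (hfg i his).not_gt hi) hs

theorem leMod_of_le (hI : IsIdealOn I) (hfg : f ≤ g) : leMod I f g :=
  leMod_of_le_outside hI hI.empty_mem fun i _ => hfg i

theorem leMod_refl (hI : IsIdealOn I) (f : ι → Ordinal.{u}) : leMod I f f :=
  leMod_of_le hI le_rfl

theorem leMod_trans (hI : IsIdealOn I) (hfg : leMod I f g) (hgh : leMod I g h) : leMod I f h :=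
  leMod_of_le_outside hI (hI.union_mem hfg hgh) fun i hi => by
    simp only [mem_union, mem_ofPred_eq, not_or, not_lt] at hi
    exact hi.1.trans hi.2

end leMod

def IsUpperBoundMod {ι : Type} (I : Set (Set ι)) (δ : Ordinal.{0})
    (F : Ordinal.{0} → ι → Ordinal.{u}) (f : ι → Ordinal.{u}) : Prop :=
  ∀ α < δ, leMod I (F α) f

section pointwiseSup

-- Mathlib only provides `Small.{0}` here, while `⨆` into `Ordinal.{u}` needs `Small.{u}`.
instance Ordinal.small_Iio_of_zero (δ : Ordinal.{0}) : Small.{u} (Iio δ) :=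
  small_lift.{1, u, 0} _

variable {ι : Type} {δ : Ordinal.{0}} {F : Ordinal.{0} → ι → Ordinal.{u}}

noncomputable def pointwiseSup (δ : Ordinal.{0}) (F : Ordinal.{0} → ι → Ordinal.{u}) (i : ι) :
    Ordinal.{u} :=
  ⨆ α : Iio δ, F α i

theorem le_pointwiseSup {α : Ordinal.{0}} (hα : α < δ) (i : ι) : F α i ≤ pointwiseSup δ F i :=
  Ordinal.le_iSup (fun α : Iio δ => F α i) ⟨α, hα⟩

theorem pointwiseSup_le {i : ι} {x : Ordinal.{u}} (h : ∀ α < δ, F α i ≤ x) :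
    pointwiseSup δ F i ≤ x :=
  Ordinal.iSup_le fun α => h α α.2

theorem exists_lub_of_finite [Finite ι] {I : Set (Set ι)} (hI : IsIdealOn I) (δ : Ordinal.{0})
    (F : Ordinal.{0} → ι → Ordinal.{u}) :
    ∃ f, IsUpperBoundMod I δ F f ∧ ∀ f', IsUpperBoundMod I δ F f' → leMod I f f' := by
  obtain ⟨a, ha, hmax⟩ := hI.exists_greatest
  refine ⟨pointwiseSup δ F, fun α hα => leMod_of_le hI fun i => le_pointwiseSup hα i,
    fun f' hf' => leMod_of_le_outside hI ha fun i hi => pointwiseSup_le fun α hα => ?_⟩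
  by_contra hlt
  exact hi (hmax _ (hf' α hα) (not_le.1 hlt))

end pointwiseSup

section IsCofinalValue

variable {X : Type*} {δ : Ordinal.{v}}

def IsCofinalValue (δ : Ordinal.{v}) (c : Ordinal.{v} → X) (x : X) : Prop :=
  ∀ β < δ, ∃ γ, β ≤ γ ∧ γ < δ ∧ c γ = x

theorem exists_isCofinalValue_of_mem_range {A : Type v} (Φ : A → X) (hA : #A < δ.cof)
    {c : Ordinal.{v} → X} (hc : ∀ α < δ, c α ∈ range Φ) : ∃ a, IsCofinalValue δ c (Φ a) := by
  choose k hk using hc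
  by_contra! hcon
  simp only [IsCofinalValue, not_forall, not_exists, not_and] at hcon
  choose b hbδ hb using hcon
  have hsup : ⨆ a, b a < δ := Ordinal.iSup_lt_of_lt_cof hA hbδ
  exact hb (k _ hsup) _ (Ordinal.le_iSup b _) hsup (hk _ hsup).symm

theorem IsCofinalValue.leMod_of_monotone {ι : Type} {I : Set (Set ι)}
    {c : Ordinal.{v} → ι → Ordinal.{u}} {x : ι → Ordinal.{u}} (hx : IsCofinalValue δ c x)
    (hc : ∀ α β, α ≤ β → β < δ → leMod I (c α) (c β)) {α : Ordinal.{v}} (hα : α < δ) :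
    leMod I (c α) x := by
  obtain ⟨γ, hαγ, hγ, rfl⟩ := hx α hα
  exact hc α γ hαγ hγ

end IsCofinalValue

section minCover

variable {ι : Type}

/-- Junk value `0` at `i` if no stage `ζ < ξ` has `f i ≤ G ζ i`. -/
noncomputable def minCover (G : Ordinal.{0} → ι → Ordinal.{u}) (ξ : Ordinal.{0})
    (f : ι → Ordinal.{u}) (i : ι) : Ordinal.{u} :=
  sInf ((G · i) '' {ζ | ζ < ξ ∧ f i ≤ G ζ i})

variable {G : Ordinal.{0} → ι → Ordinal.{u}} {ξ : Ordinal.{0}} {f f' : ι → Ordinal.{u}} {i : ι}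

theorem minCover_congr {G' : Ordinal.{0} → ι → Ordinal.{u}} (h : ∀ ζ < ξ, G ζ = G' ζ) :
    minCover G ξ = minCover G' ξ := by
  funext f i
  unfold minCover
  congr 1
  ext v
  refine exists_congr fun ζ => ?_
  by_cases hζ : ζ < ξ
  · simp [hζ, h ζ hζ]
  · simp [hζ]

theorem exists_eq_minCover (h : ∃ ζ < ξ, f i ≤ G ζ i) :
    ∃ ζ < ξ, f i ≤ G ζ i ∧ G ζ i = minCover G ξ f i := by
  obtain ⟨ζ, hζ, hfζ⟩ := h
  obtain ⟨ζ', ⟨hζ', hfζ'⟩, heq⟩ := csInf_mem (⟨G ζ i, ζ, ⟨hζ, hfζ⟩, rfl⟩ :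
    ((G · i) '' {ζ | ζ < ξ ∧ f i ≤ G ζ i}).Nonempty)
  exact ⟨ζ', hζ', hfζ', heq⟩

theorem minCover_le {ζ : Ordinal.{0}} (hζ : ζ < ξ) (h : f i ≤ G ζ i) : minCover G ξ f i ≤ G ζ i :=
  csInf_le' ⟨ζ, ⟨hζ, h⟩, rfl⟩

theorem le_minCover (h : ∃ ζ < ξ, f i ≤ G ζ i) : f i ≤ minCover G ξ f i := by
  obtain ⟨ζ, -, hfζ, heq⟩ := exists_eq_minCover h
  exact heq ▸ hfζ

theorem minCover_mono (hff' : f i ≤ f' i) (h : ∃ ζ < ξ, f' i ≤ G ζ i) :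
    minCover G ξ f i ≤ minCover G ξ f' i := by
  obtain ⟨ζ, hζ, hfζ, heq⟩ := exists_eq_minCover h
  exact heq ▸ minCover_le hζ (hff'.trans hfζ)

theorem minCover_anti {ξ' : Ordinal.{0}} (hξ : ξ ≤ ξ') (h : ∃ ζ < ξ, f i ≤ G ζ i) :
    minCover G ξ' f i ≤ minCover G ξ f i := by
  obtain ⟨ζ, hζ, hfζ, heq⟩ := exists_eq_minCover h
  exact heq ▸ minCover_le (hζ.trans_le hξ) hfζ

theorem exists_minCover_eq_of_lt_cof {Ω : Ordinal.{0}} (hΩ : #ι < Ω.cof)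
    (h : ∀ i, ∃ ζ < Ω, f i ≤ G ζ i) :
    ∃ ρ < Ω, ∀ ξ, ρ < ξ → ξ ≤ Ω → minCover G ξ f = minCover G Ω f := by
  choose ζ hζΩ hfζ hζ using fun i => exists_eq_minCover (h i)
  refine ⟨⨆ i, ζ i, Ordinal.iSup_lt_of_lt_cof hΩ hζΩ, fun ξ hρξ hξΩ => funext fun i => ?_⟩
  have hζξ : ζ i < ξ := (Ordinal.le_iSup ζ i).trans_lt hρξ
  exact le_antisymm (hζ i ▸ minCover_le hζξ (hfζ i)) (minCover_anti hξΩ ⟨ζ i, hζξ, hfζ i⟩)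

/-- A cover is determined by the stages `ζ i < ξ` realising it, so there are at most `|ξ|^κ`. -/
theorem minCover_mem_range (h : ∀ i, ∃ ζ < ξ, f i ≤ G ζ i) :
    minCover G ξ f ∈ range fun (k : ι → ξ.ToType) i => G (Ordinal.ToType.mk.symm (k i)) i := by
  choose ζ hζξ _ hζ using fun i => exists_eq_minCover (h i)
  exact ⟨fun i => Ordinal.ToType.mk ⟨ζ i, hζξ i⟩, funext fun i => by simp [hζ i]⟩

variable {δ : Ordinal.{0}} {F : Ordinal.{0} → ι → Ordinal.{u}}

theorem exists_isCofinalValue_minCover (hκ : ℵ₀ ≤ #ι) (hξ : ξ.card ≤ #ι)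
    (hcof : 2 ^ #ι < δ.cof) (h : ∀ α < δ, ∀ i, ∃ ζ < ξ, F α i ≤ G ζ i) :
    ∃ x, IsCofinalValue δ (fun α => minCover G ξ (F α)) x := by
  have hcard : #(ι → ξ.ToType) < δ.cof :=
    calc #(ι → ξ.ToType) = ξ.card ^ #ι := by simp [mk_toType]
      _ ≤ #ι ^ #ι := power_le_power_right hξ
      _ = 2 ^ #ι := power_self_eq hκ
      _ < δ.cof := hcof
  obtain ⟨k, hk⟩ := exists_isCofinalValue_of_mem_range _ hcard fun α hα =>
    minCover_mem_range (h α hα)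
  exact ⟨_, hk⟩

theorem exists_forall_minCover_eq {Ω : Ordinal.{0}} (hΩ : #ι < Ω.cof) (hΩδ : Ω.card < δ.cof)
    (h : ∀ α < δ, ∀ i, ∃ ζ < Ω, F α i ≤ G ζ i) :
    ∃ ρ < Ω, ∀ γ < δ, ∃ β, γ ≤ β ∧ β < δ ∧
      ∀ ξ, ρ < ξ → ξ ≤ Ω → minCover G ξ (F β) = minCover G Ω (F β) := by
  choose! ρ hρΩ hρ using fun α (hα : α < δ) => exists_minCover_eq_of_lt_cof hΩ (h α hα)
  obtain ⟨r, hr⟩ := exists_isCofinalValue_of_mem_range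
    (fun t : Ω.ToType => (Ordinal.ToType.mk.symm t).1) (by rwa [mk_toType]) (c := ρ)
    fun α hα => ⟨Ordinal.ToType.mk ⟨ρ α, hρΩ α hα⟩, by simp⟩
  refine ⟨_, mem_Iio.1 (Ordinal.ToType.mk.symm r).2, fun γ hγ => ?_⟩
  obtain ⟨β, hγβ, hβ, hρβ⟩ := hr γ hγ
  exact ⟨β, hγβ, hβ, hρβ ▸ hρ β hβ⟩

variable {I : Set (Set ι)}

theorem minCover_leMod_minCover (hI : IsIdealOn I) (hff' : leMod I f f')
    (h : ∀ i, ∃ ζ < ξ, f' i ≤ G ζ i) : leMod I (minCover G ξ f) (minCover G ξ f') :=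
  leMod_of_le_outside hI hff' fun i hi => minCover_mono (not_lt.1 hi) (h i)

theorem minCover_leMod (hI : IsIdealOn I) {ζ : Ordinal.{0}} (hζ : ζ < ξ) (h : leMod I f (G ζ)) :
    leMod I (minCover G ξ f) (G ζ) :=
  leMod_of_le_outside hI h fun _ hi => minCover_le hζ (not_lt.1 hi)

theorem minCover_leMod_minCover_of_le (hI : IsIdealOn I)
    (hinc : ∀ α β, α < β → β < δ → leMod I (F α) (F β)) (h : ∀ α < δ, ∀ i, ∃ ζ < ξ, F α i ≤ G ζ i)
    {α β : Ordinal.{0}} (hαβ : α ≤ β) (hβ : β < δ) :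
    leMod I (minCover G ξ (F α)) (minCover G ξ (F β)) :=
  minCover_leMod_minCover hI (hαβ.lt_or_eq.elim (hinc α β · hβ) (· ▸ leMod_refl hI _)) (h β hβ)

theorem IsCofinalValue.isUpperBoundMod_minCover (hI : IsIdealOn I)
    (hinc : ∀ α β, α < β → β < δ → leMod I (F α) (F β)) (h : ∀ α < δ, ∀ i, ∃ ζ < ξ, F α i ≤ G ζ i)
    {x : ι → Ordinal.{u}} (hx : IsCofinalValue δ (fun α => minCover G ξ (F α)) x) :
    IsUpperBoundMod I δ F x := fun α hα =>
  leMod_trans hI (leMod_of_le hI fun i => le_minCover (h α hα i))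
    (hx.leMod_of_monotone (fun _ _ => minCover_leMod_minCover_of_le hI hinc h) hα)

end minCover

section coverSeq

variable {ι : Type} (δ : Ordinal.{0}) (F : Ordinal.{0} → ι → Ordinal.{u})
  (next : (ι → Ordinal.{u}) → ι → Ordinal.{u})

noncomputable def cofinalValue (c : Ordinal.{0} → ι → Ordinal.{u}) : ι → Ordinal.{u} :=
  Classical.epsilon (IsCofinalValue δ c)

noncomputable def coverSeq : Ordinal.{0} → ι → Ordinal.{u} :=
  Ordinal.lt_wf.fix fun ξ G =>
    if ξ = 0 then pointwiseSup δ F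
    else next (cofinalValue δ fun α => minCover (fun ζ => if h : ζ < ξ then G ζ h else 0) ξ (F α))

theorem coverSeq_eq (ξ : Ordinal.{0}) :
    coverSeq δ F next ξ = if ξ = 0 then pointwiseSup δ F
      else next (cofinalValue δ fun α => minCover (coverSeq δ F next) ξ (F α)) := by
  rw [coverSeq, WellFounded.fix_eq]
  split_ifs
  · rfl
  · congr 2
    funext α
    exact congrFun (minCover_congr (G' := coverSeq δ F next) fun ζ hζ => dif_pos hζ) _

theorem coverSeq_zero : coverSeq δ F next 0 = pointwiseSup δ F := by
  rw [coverSeq_eq, if_pos rfl]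

theorem coverSeq_of_ne_zero {ξ : Ordinal.{0}} (hξ : ξ ≠ 0) :
    coverSeq δ F next ξ = next (cofinalValue δ fun α => minCover (coverSeq δ F next) ξ (F α)) := by
  rw [coverSeq_eq, if_neg hξ]

variable {δ F next}

theorem exists_lt_le_coverSeq {ξ α : Ordinal.{0}} (hξ : 0 < ξ) (hα : α < δ) (i : ι) :
    ∃ ζ < ξ, F α i ≤ coverSeq δ F next ζ i :=
  ⟨0, hξ, by simpa only [coverSeq_zero] using le_pointwiseSup hα i⟩

theorem exists_isUpperBoundMod_leMod_next {I : Set (Set ι)} (hI : IsIdealOn I)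
    (hinc : ∀ α β, α < β → β < δ → leMod I (F α) (F β)) (hκ : ℵ₀ ≤ #ι)
    (hcof : 2 ^ #ι < δ.cof)
    (hnext : ∀ f, IsUpperBoundMod I δ F f → IsUpperBoundMod I δ F (next f)) :
    ∃ f, IsUpperBoundMod I δ F f ∧ leMod I f (next f) := by
  set G := coverSeq δ F next
  set Ω := (Order.succ #ι).ord
  have hΩ : Order.IsSuccLimit Ω := isSuccLimit_ord (hκ.trans (Order.le_succ _))
  have hδ : 0 < δ := by
    rw [pos_iff_ne_zero]
    rintro rfl
    simp at hcof
  have hcofΩ : #ι < Ω.cof := by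
    rw [(isRegular_succ hκ).cof_ord]
    exact Order.lt_succ _
  have hΩδ : Ω.card < δ.cof := by
    rw [card_ord]
    exact (Order.succ_le_of_lt (cantor _)).trans_lt hcof
  obtain ⟨ρ, hρΩ, hρ⟩ := exists_forall_minCover_eq (G := G) hcofΩ hΩδ fun α hα =>
    exists_lt_le_coverSeq hΩ.bot_lt hα
  set σ := ρ + 1
  have hσ : 0 < σ := Order.lt_add_one_iff.2 bot_le
  have hσΩ : σ < Ω := hΩ.add_one_lt hρΩ
  have hcov : ∀ α < δ, ∀ i, ∃ ζ < σ, F α i ≤ G ζ i := fun α hα => exists_lt_le_coverSeq hσ hα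
  set W := cofinalValue δ fun α => minCover G σ (F α)
  have hW : IsCofinalValue δ (fun α => minCover G σ (F α)) W := Classical.epsilon_spec
    (exists_isCofinalValue_minCover hκ (Order.lt_succ_iff.1 (lt_ord.1 hσΩ)) hcof hcov)
  have hWub : IsUpperBoundMod I δ F W := hW.isUpperBoundMod_minCover hI hinc hcov
  have hGσ : G σ = next W := coverSeq_of_ne_zero δ F next hσ.ne'
  refine ⟨W, hWub, hGσ ▸ ?_⟩
  obtain ⟨γ, -, hγ, hWγ⟩ := hW 0 hδ
  obtain ⟨β, hγβ, hβ, hβρ⟩ := hρ γ hγ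
  have hGσub : IsUpperBoundMod I δ F (G σ) := hGσ ▸ hnext W hWub
  -- `W ≤_I minCover G σ (F β) = minCover G Ω (F β) ≤_I G σ`, the last step as `σ < Ω`
  exact leMod_trans hI (hWγ ▸ minCover_leMod_minCover_of_le hI hinc hcov hγβ hβ)
    (hβρ σ (lt_add_one ρ) hσΩ.le ▸ minCover_leMod hI hσΩ (hGσub β hβ))

end coverSeq

theorem exists_lub_of_big_cof_general {ι : Type} (I : Set (Set ι)) (hI : IsIdealOn I)
    (δ : Ordinal) (F : Ordinal → ι → Ordinal)
    (hcof2 : 2 ^ #ι < δ.cof)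
    (hinc : ∀ α β, α < β → β < δ → leMod I (F α) (F β)) :
    ∃ f : ι → Ordinal, (∀ α < δ, leMod I (F α) f) ∧
      ∀ f' : ι → Ordinal, (∀ α < δ, leMod I (F α) f') → leMod I f f' := by
  rcases lt_or_ge #ι ℵ₀ with hfin | hκ
  · have := lt_aleph0_iff_finite.1 hfin
    exact exists_lub_of_finite hI δ F
  by_contra! hno
  choose! next hnext hnot using hno
  obtain ⟨f, hf, hle⟩ := exists_isUpperBoundMod_leMod_next hI hinc hκ hcof2 hnext
  exact hnot f hf hle

/-- if `cf(δ) > κ⁺` and `cf(δ) > 2^κ`, any `≤_I`-increasing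
`δ`-sequence in `^κOrd` has a `≤_I`-least upper bound. -/
theorem exists_lub_of_big_cof {ι : Type} (I : Set (Set ι)) (hI : IsIdealOn I)
    (δ : Ordinal) (F : Ordinal → ι → Ordinal)
    (hcof1 : Order.succ (#ι) < δ.cof)
    (hcof2 : 2 ^ #ι < δ.cof)
    (hinc : ∀ α β, α < β → β < δ → leMod I (F α) (F β)) :
    ∃ f : ι → Ordinal, (∀ α < δ, leMod I (F α) f) ∧
      ∀ f' : ι → Ordinal, (∀ α < δ, leMod I (F α) f') → leMod I f f' :=
  exists_lub_of_big_cof_general I hI δ F hcof2 hinc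
end

section
/- Let λ be a singular cardinal and let μ = min{τ : 2^τ > λ}, a regular cardinal, and suppose 2^θ = λ for some θ < μ. If cf(λ) ≠ cf(μ), then for every regular χ ≤ 2^μ with χ > λ there is a tree T with μ levels, each initial segment of levels of cardinality < λ, having at least χ many μ-branches. -/
open Cardinal Set

noncomputable instance iwoToType (o : Ordinal.{0}) : IsWellOrder o.ToType (· < ·) :=
  isWellOrder_lt

noncomputable def rkaux (o : Ordinal.{0}) (x : o.ToType) : Ordinal.{0} :=
  Ordinal.typein (α := o.ToType) (· < ·) x

lemma rkaux_lt (o : Ordinal.{0}) (x : o.ToType) : rkaux o x < o := by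
  conv_rhs => rw [← Ordinal.type_toType o]
  exact Ordinal.typein_lt_type _ x

lemma rkaux_inj (o : Ordinal.{0}) : Function.Injective (rkaux o) := fun _ _ h =>
  Ordinal.typein_injective (α := o.ToType) (· < ·) h

/-- Subcase 2A of Observation 1.12: `λ` singular,
`λ < λ^{<λ}`, `μ = min {τ : 2^τ > λ}`, `2^θ = λ` for some `θ < μ`,
and `cf(λ) ≠ μ`.  Then for every regular `χ` with `λ < χ ≤ 2^μ` there is
a tree with `μ` levels, each initial segment of levels of size `< λ`,
having at least `χ` many `μ`-branches. -/
theorem tree_many_branches (lam : Cardinal.{0})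
    (hinf : ℵ₀ ≤ lam) (hsing : ¬ lam.IsRegular)
    (hlt : lam < lam ^< lam)
    (μ : Cardinal.{0}) (hμ : μ = sInf {τ : Cardinal.{0} | lam < 2 ^ τ})
    (θ : Cardinal.{0}) (hθ : θ < μ) (hθ2 : 2 ^ θ = lam)
    (hcf : lam.ord.cof ≠ μ)
    (χ : Cardinal.{0}) (hχreg : χ.IsRegular) (hχ : χ ≤ 2 ^ μ) (hchilam : lam < χ) :
    ∃ T : Set (Σ β : Ordinal, (Set.Iio β → Bool)),
      (∀ n ∈ T, n.1 < μ.ord) ∧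
      (∀ α < μ.ord, #{n ∈ T | n.1 < α} < Cardinal.lift.{1,0} lam) ∧
      Cardinal.lift.{1,0} χ ≤
        #{η : Set.Iio μ.ord → Bool |
          ∀ β, ∀ h : β < μ.ord,
            (⟨β, fun j => η ⟨j.1, lt_trans j.2 h⟩⟩ :
              Σ β : Ordinal, (Set.Iio β → Bool)) ∈ T} := by
  classical
  -- basic cardinal facts
  have hθinf : ℵ₀ ≤ θ := by
    by_contra h
    push_neg at h
    have h2 : (2 : Cardinal.{0}) ^ θ < ℵ₀ :=
      Cardinal.power_lt_aleph0 (Cardinal.nat_lt_aleph0 2) h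
    rw [hθ2] at h2
    exact absurd hinf (not_le.mpr h2)
  have hpow_le : ∀ τ : Cardinal.{0}, τ < μ → 2 ^ τ ≤ lam := by
    intro τ hτ
    by_contra h
    have : μ ≤ τ := hμ ▸ csInf_le' (not_le.mp h)
    exact absurd hτ (not_lt.mpr this)
  have hμle : μ ≤ lam := hμ ▸ csInf_le' (Cardinal.cantor lam)
  -- cofinality of lam exceeds μ
  have hcof : μ < lam.ord.cof := by
    have hle : μ ≤ lam.ord.cof := by
      apply le_of_forall_lt
      intro τ hτ
      have hmaxμ : max θ τ < μ := max_lt hθ hτ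
      have h1 : (2 : Cardinal.{0}) ^ (max θ τ) = lam :=
        le_antisymm (hpow_le _ hmaxμ)
          (by rw [← hθ2]; exact Cardinal.power_le_power_left two_ne_zero (le_max_left _ _))
      have h2 := Cardinal.lt_cof_power (hθinf.trans (le_max_left θ τ)) one_lt_two
      rw [h1] at h2
      exact lt_of_le_of_lt (le_max_right θ τ) h2
    exact hle.lt_of_ne (Ne.symm hcf)
  -- the set of nodes of height < μ has cardinality at most lam
  have hS : #{n : (Σ β : Ordinal.{0}, (Set.Iio β → Bool)) // n.1 < μ.ord} ≤
      Cardinal.lift.{1,0} lam := by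
    have e : {n : (Σ β : Ordinal.{0}, (Set.Iio β → Bool)) // n.1 < μ.ord} ≃
        Σ β : Set.Iio μ.ord, (Set.Iio β.1 → Bool) :=
      { toFun := fun n => ⟨⟨n.1.1, n.2⟩, n.1.2⟩
        invFun := fun x => ⟨⟨x.1.1, x.2⟩, x.1.2⟩
        left_inv := fun _ => rfl
        right_inv := fun _ => rfl }
    rw [Cardinal.mk_congr e, Cardinal.mk_sigma]
    have hbd : ∀ β : Set.Iio μ.ord, #(Set.Iio β.1 → Bool) ≤ Cardinal.lift.{1,0} lam := by
      intro β
      have hcard : (β : Ordinal.{0}).card < μ := Cardinal.lt_ord.mp β.2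
      have : #(Set.Iio β.1 → Bool) = Cardinal.lift.{1,0} (2 ^ (β : Ordinal.{0}).card) := by
        rw [Cardinal.mk_arrow, Cardinal.mk_bool, Ordinal.mk_Iio_ordinal,
          Cardinal.lift_two_power]
        simp [Cardinal.lift_id']
      rw [this]
      exact Cardinal.lift_le.mpr (hpow_le _ hcard)
    calc (Cardinal.sum fun β : Set.Iio μ.ord => #(Set.Iio β.1 → Bool))
        ≤ Cardinal.sum (fun _ : Set.Iio μ.ord => Cardinal.lift.{1,0} lam) :=
          Cardinal.sum_le_sum _ _ hbd
      _ = #(Set.Iio μ.ord) * Cardinal.lift.{1,0} lam := Cardinal.sum_const' _ _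
      _ ≤ Cardinal.lift.{1,0} lam * Cardinal.lift.{1,0} lam := by
          rw [Ordinal.mk_Iio_ordinal, Cardinal.card_ord]
          exact mul_le_mul_left (Cardinal.lift_le.mpr hμle) _
      _ = Cardinal.lift.{1,0} lam :=
          Cardinal.mul_eq_self (Cardinal.aleph0_le_lift.mpr hinf)
  -- an injection of the nodes into lam.ord.toType
  obtain ⟨j⟩ : Nonempty
      ({n : (Σ β : Ordinal.{0}, (Set.Iio β → Bool)) // n.1 < μ.ord} ↪ lam.ord.ToType) := by
    rw [← Cardinal.lift_mk_le.{1}]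
    rw [Cardinal.mk_toType, Cardinal.card_ord]
    simpa using hS
  set rk : {n : (Σ β : Ordinal.{0}, (Set.Iio β → Bool)) // n.1 < μ.ord} → Ordinal.{0} :=
    fun n => rkaux lam.ord (j n) with hrkdef
  have hrklt : ∀ n, rk n < lam.ord := fun n => rkaux_lt _ _
  have hrkinj : Function.Injective rk := fun a b h => j.injective (rkaux_inj _ h)
  -- nodes of a branch
  set nd : (Set.Iio μ.ord → Bool) → (Set.Iio μ.ord) →
      {n : (Σ β : Ordinal.{0}, (Set.Iio β → Bool)) // n.1 < μ.ord} :=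
    fun η ε => ⟨⟨ε.1, fun i => η ⟨i.1, show i.1 < μ.ord from lt_trans i.2 ε.2⟩⟩, ε.2⟩ with hnddef
  -- every branch is bounded
  have hbound : ∀ η : Set.Iio μ.ord → Bool, ∃ b < lam.ord, ∀ ε, rk (nd η ε) < b := by
    intro η
    set f : μ.ord.ToType → Ordinal.{0} :=
      fun i => rk (nd η ((Ordinal.ToType.mk (o := μ.ord)).symm i)) with hfdef
    have hsup : iSup f < lam.ord := by
      apply Ordinal.iSup_lt_ord _ (fun i => hrklt _)
      rwa [Cardinal.mk_toType, Cardinal.card_ord]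
    refine ⟨Order.succ (iSup f), ?_, ?_⟩
    · exact (Cardinal.isSuccLimit_ord hinf).succ_lt hsup
    · intro ε
      have h1 : f ((Ordinal.ToType.mk (o := μ.ord)) ε) = rk (nd η ε) := by
        rw [hfdef]; simp
      calc rk (nd η ε) = f ((Ordinal.ToType.mk (o := μ.ord)) ε) := h1.symm
        _ ≤ iSup f := Ordinal.le_iSup f _
        _ < Order.succ (iSup f) := Order.lt_succ _
  -- pigeonhole: some bound works for χ many branches
  set Bs : Ordinal.{0} → Set (Set.Iio μ.ord → Bool) :=
    fun b => {η | ∀ ε, rk (nd η ε) < b} with hBsdef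
  have hχlift : (Cardinal.lift.{1,0} χ).IsRegular := by
    refine ⟨Cardinal.aleph0_le_lift.mpr hχreg.1, ?_⟩
    rw [← Cardinal.lift_ord, ← Ordinal.lift_cof]
    exact Cardinal.lift_le.mpr hχreg.2
  have hexists : ∃ b < lam.ord, Cardinal.lift.{1,0} χ ≤ #(Bs b) := by
    by_contra hcon
    push_neg at hcon
    have hcover : (⋃ b : Set.Iio lam.ord, Bs b.1) = Set.univ := by
      ext η
      simp only [Set.mem_iUnion, Set.mem_univ, iff_true]
      obtain ⟨b, hb, h⟩ := hbound η
      exact ⟨⟨b, hb⟩, h⟩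
    have h1 : Cardinal.lift.{1,0} χ ≤ #(⋃ b : Set.Iio lam.ord, Bs b.1) := by
      rw [hcover, Cardinal.mk_univ]
      have : #(Set.Iio μ.ord → Bool) = Cardinal.lift.{1,0} (2 ^ μ) := by
        rw [Cardinal.mk_arrow, Cardinal.mk_bool, Ordinal.mk_Iio_ordinal, Cardinal.card_ord,
          Cardinal.lift_two_power]
        simp [Cardinal.lift_id']
      rw [this]
      exact Cardinal.lift_le.mpr hχ
    have h2 : #(⋃ b : Set.Iio lam.ord, Bs b.1) < Cardinal.lift.{1,0} χ := by
      refine lt_of_le_of_lt Cardinal.mk_iUnion_le_sum_mk ?_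
      refine Cardinal.sum_lt_of_isRegular hχlift ?_ ?_
      · rw [Ordinal.mk_Iio_ordinal, Cardinal.card_ord]
        exact Cardinal.lift_lt.mpr hchilam
      · exact fun b => hcon b.1 b.2
    exact absurd h1 (not_le.mpr h2)
  obtain ⟨b, hbL, hb⟩ := hexists
  -- the tree
  refine ⟨{n | ∃ h : n.1 < μ.ord, rk ⟨n, h⟩ < b}, ?_, ?_, ?_⟩
  · rintro n ⟨h, -⟩
    exact h
  · intro α hα
    have hsub : #{n : (Σ β : Ordinal.{0}, (Set.Iio β → Bool)) |
        n ∈ {n | ∃ h : n.1 < μ.ord, rk ⟨n, h⟩ < b} ∧ n.1 < α} ≤ #(Set.Iio b) := by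
      refine Cardinal.mk_le_of_injective
        (f := fun x => (⟨rk ⟨x.1, x.2.1.choose⟩, x.2.1.choose_spec⟩ : Set.Iio b)) ?_
      intro x y hxy
      have h1 : rk ⟨x.1, x.2.1.choose⟩ = rk ⟨y.1, y.2.1.choose⟩ := congrArg Subtype.val hxy
      have h2 := hrkinj h1
      have h3 := Subtype.ext_iff.mp h2
      exact Subtype.ext h3
    refine lt_of_le_of_lt hsub ?_
    rw [Ordinal.mk_Iio_ordinal]
    exact Cardinal.lift_lt.mpr (Cardinal.lt_ord.mp hbL)
  · refine le_trans hb (Cardinal.mk_le_mk_of_subset ?_)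
    intro η hη β h
    exact ⟨h, hη ⟨β, h⟩⟩
end

section
/- Suppose F ⊆ ∏_{i<κ} λ_i, J is an ℵ₁-complete ideal on κ, distinct members of F are distinct modulo J (f ≠ g in F implies {i : f(i) = g(i)} ∈ J), and |F| ≥ θ where cf(θ) > 2^κ. Then there exists g* ∈ ∏_{i<κ}(λ_i + 1) such that: (a) Y = {f ∈ F : f <_J g*} has cardinality ≥ θ; (b) for every f' <_J g*, the set {f ∈ F : f ≤_J f'} has cardinality < θ; and (c) there are f_α ∈ Y for α < θ with f_α <_J g* and for α < β < θ, not f_β ≤_J f_α. -/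
/-!
Modulo an ℵ₁-complete proper ideal `J`, strict domination `<_J` of ordinal-valued functions is
well-founded, so among the `g ≤ λ` having at least `θ` members of `F` `<_J`-below them there is a
`<_J`-minimal one, `g*`. Were there `θ` members of `F` `≤_J`-below some `f' <_J g*`, then, since
`f ↦ {i | f' i ≤ f i}` takes at most `2^κ < cf θ` values, `θ` of them would share this set `A`;
two distinct ones agree with `f'` on `A`, so `A ∈ J`, all of them are `<_J f'`, and `min f' g*`
would contradict minimality. The sequence in (c) enumerates an initial segment of a well-order
of `Y` extending `<_J`.
-/

open Cardinal Set Filter InitialSeg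

universe u v w

theorem Filter.wellFounded_eventually_lt {ι α : Type*} [Preorder α] [WellFoundedLT α]
    (L : Filter ι) [CountableInterFilter L] [L.NeBot] :
    WellFounded fun f g : ι → α => ∀ᶠ i in L, f i < g i := by
  refine wellFounded_iff_isEmpty_descending_chain.2 ⟨fun ⟨x, hx⟩ => ?_⟩
  obtain ⟨i, hi⟩ := (eventually_countable_forall.2 hx).exists
  exact (wellFounded_iff_isEmpty_descending_chain.1 wellFounded_lt).false ⟨fun n => x n i, hi⟩

theorem Filter.eventually_lt_of_setOf_le_eq {ι α : Type*} [LinearOrder α] {L : Filter ι}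
    {f g h : ι → α} (hf : ∀ᶠ i in L, f i ≤ h i) (hg : ∀ᶠ i in L, g i ≤ h i)
    (hfg : ∀ᶠ i in L, f i ≠ g i) (heq : {i | h i ≤ f i} = {i | h i ≤ g i}) :
    ∀ᶠ i in L, f i < h i := by
  filter_upwards [hf, hg, hfg] with i hfi hgi hne
  refine hfi.lt_of_ne fun hfh => hne (hfh.trans (hgi.antisymm ?_).symm)
  exact (show i ∈ {i | h i ≤ g i} from heq ▸ hfh.ge)

theorem Cardinal.aleph0_le_of_two_power_lt_cof {κ θ : Cardinal} (h : 2 ^ κ < θ.ord.cof) :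
    ℵ₀ ≤ θ := by
  have h_one : (1 : Cardinal) ≤ 2 ^ κ :=
    Cardinal.one_le_iff_ne_zero.2 (Cardinal.power_ne_zero _ two_ne_zero)
  exact (Ordinal.aleph0_le_cof_iff.2 (h_one.trans_lt h)).trans (Ordinal.cof_ord_le θ)

theorem Filter.eventually_ofCountableUnion_iff {ι : Type*} {J : Set (Set ι)} {hunion hmono}
    {p : ι → Prop} : (∀ᶠ i in ofCountableUnion J hunion hmono, p i) ↔ {i | ¬ p i} ∈ J := by
  simp [Filter.Eventually, compl_ofPred]

theorem sUnion_mem_of_iUnion_mem {ι : Type*} {J : Set (Set ι)} (h0 : ∅ ∈ J)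
    (hunion : ∀ g : ℕ → Set ι, (∀ n, g n ∈ J) → (⋃ n, g n) ∈ J) (S : Set (Set ι))
    (hS : S.Countable) (hSJ : ∀ s ∈ S, s ∈ J) : ⋃₀ S ∈ J := by
  rcases S.eq_empty_or_nonempty with rfl | hne
  · rwa [sUnion_empty]
  · obtain ⟨g, rfl⟩ := hS.exists_eq_range hne
    rw [sUnion_range]
    exact hunion g fun n => hSJ _ (mem_range_self n)

theorem le_card_eventually_lt_of_le_card_eventually_le {ι : Type u} {α : Type v} [LinearOrder α]
    {L : Filter ι} {F : Set (ι → α)} (hF : F.Pairwise fun f g => ∀ᶠ i in L, f i ≠ g i)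
    {θ : Cardinal.{max u v}} (hθ : ℵ₀ ≤ θ) (hcof : lift.{v} (2 ^ #ι) < θ.ord.cof) (h : ι → α)
    (hle : θ ≤ #{f ∈ F | ∀ᶠ i in L, f i ≤ h i}) : θ ≤ #{f ∈ F | ∀ᶠ i in L, f i < h i} := by
  let excess (f : {f ∈ F | ∀ᶠ i in L, f i ≤ h i}) : ULift.{v} (Set ι) := ⟨{i | h i ≤ f.1 i}⟩
  obtain ⟨s, hs⟩ := infinite_pigeonhole_card excess θ hle hθ (by rwa [mk_uLift, mk_set])
  have : Nontrivial (excess ⁻¹' {s}) :=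
    one_lt_iff_nontrivial.1 (one_lt_aleph0.trans_le (hθ.trans hs))
  refine hs.trans (mk_le_of_injective (f := fun f => ⟨f.1.1, f.1.2.1, ?_⟩)
    fun f g hfg => Subtype.ext (Subtype.ext (Subtype.mk.inj hfg)))
  obtain ⟨g, hgf⟩ := exists_ne f
  have hne : f.1.1 ≠ g.1.1 := fun e => hgf (Subtype.ext (Subtype.ext e)).symm
  exact eventually_lt_of_setOf_le_eq f.1.2.2 g.1.2.2 (hF f.1.2.1 g.1.2.1 hne)
    (congrArg ULift.down (f.2.trans g.2.symm))

theorem exists_tight_bound {ι : Type u} {α : Type v} [LinearOrder α] [WellFoundedLT α]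
    {L : Filter ι} [CountableInterFilter L] [L.NeBot] {F : Set (ι → α)}
    (hF : F.Pairwise fun f g => ∀ᶠ i in L, f i ≠ g i)
    {θ : Cardinal.{max u v}} (hθ : ℵ₀ ≤ θ) (hcof : lift.{v} (2 ^ #ι) < θ.ord.cof) (top : ι → α)
    (htop : θ ≤ #{f ∈ F | ∀ᶠ i in L, f i < top i}) :
    ∃ g ≤ top, θ ≤ #{f ∈ F | ∀ᶠ i in L, f i < g i} ∧
      ∀ h : ι → α, (∀ᶠ i in L, h i < g i) → #{f ∈ F | ∀ᶠ i in L, f i ≤ h i} < θ := by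
  obtain ⟨g, ⟨hg_top, hg_card⟩, hg_min⟩ := (wellFounded_eventually_lt L).has_min
    {g | g ≤ top ∧ θ ≤ #{f ∈ F | ∀ᶠ i in L, f i < g i}} ⟨top, le_rfl, htop⟩
  refine ⟨g, hg_top, hg_card, fun h hhg => lt_of_not_ge fun hle => hg_min (h ⊓ g) ⟨?_, ?_⟩ ?_⟩
  · exact inf_le_right.trans hg_top
  · refine (le_card_eventually_lt_of_le_card_eventually_le hF hθ hcof h hle).trans
      (mk_le_mk_of_subset fun f ⟨hfF, hfh⟩ => ⟨hfF, ?_⟩)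
    filter_upwards [hfh, hhg] with i hfhi hhgi
    exact lt_inf_iff.2 ⟨hfhi, hfhi.trans hhgi⟩
  · filter_upwards [hhg] with i hi
    exact inf_le_left.trans_lt hi

theorem WellFounded.exists_embedding_Iio_ord {X : Type v} {r : X → X → Prop} (hr : WellFounded r)
    (κ : Cardinal.{w}) (hκ : lift.{v} κ ≤ lift.{w} #X) :
    ∃ e : Iio κ.ord ↪ X, ∀ a b, a < b → ¬ r (e b) (e a) := by
  have : IsWellFounded X r := ⟨hr⟩
  obtain ⟨s, hrs, hs⟩ := IsWellFounded.exists_well_order_ge r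
  have : Nonempty (((· < ·) : Iio κ.ord → Iio κ.ord → Prop) ≼i s) := by
    refine Ordinal.lift_type_le.{_, _, 0}.1 ?_
    simp only [Ordinal.type_lt_Iio]
    rw [Ordinal.lift_lift, lift_ord, ord_le, ← Ordinal.lift_card, Ordinal.card_type]
    simpa using Cardinal.lift_le.{w + 1}.2 hκ
  obtain ⟨e⟩ := this
  refine ⟨e.toEmbedding, fun a b hab hr => ?_⟩
  exact asymm (e.map_rel_iff.2 hab) (hrs _ _ hr)

theorem Filter.exists_embedding_Iio_ord_not_eventually_le {ι : Type u} {α : Type v}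
    [LinearOrder α] [WellFoundedLT α] {L : Filter ι} [CountableInterFilter L] [L.NeBot]
    {Y : Set (ι → α)} (hY : Y.Pairwise fun f g => ∀ᶠ i in L, f i ≠ g i)
    (κ : Cardinal.{w}) (hκ : lift.{max u v} κ ≤ lift.{w} #Y) :
    ∃ e : Iio κ.ord ↪ Y, ∀ a b, a < b → ¬ ∀ᶠ i in L, (e b).1 i ≤ (e a).1 i := by
  obtain ⟨e, he⟩ :=
    (InvImage.wf Subtype.val (wellFounded_eventually_lt L)).exists_embedding_Iio_ord κ hκ
  refine ⟨e, fun a b hab hle => he a b hab ?_⟩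
  have hne : (e b : ι → α) ≠ e a := fun h => hab.ne' (e.injective (Subtype.ext h))
  filter_upwards [hle, hY (e b).2 (e a).2 hne] with i h1 h2 using h1.lt_of_ne h2

/-- Observation 1.24: for `F ⊆ ∏_i λ_i` of size `≥ θ`,
`cf(θ) > 2^κ`, with distinct members distinct modulo an ℵ₁-complete ideal
`J`, there is `g* ∈ ∏_i (λ_i + 1)` such that `Y = {f ∈ F : f <_J g*}` has
size `≥ θ`, every `f' <_J g*` has fewer than `θ` members of `F` below it,
and there is a `θ`-sequence in `Y` with no later member `≤_J` an earlier
one. -/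
theorem exists_bounding_function {ι : Type} (lams : ι → Cardinal.{0})
    (J : Set (Set ι))
    (hJ : ∅ ∈ J ∧ (∀ s t : Set ι, s ⊆ t → t ∈ J → s ∈ J) ∧
      (∀ s t : Set ι, s ∈ J → t ∈ J → s ∪ t ∈ J) ∧ Set.univ ∉ J)
    (hcompl : ∀ g : ℕ → Set ι, (∀ n, g n ∈ J) → (⋃ n, g n) ∈ J)
    (F : Set (ι → Ordinal.{0}))
    (hF : ∀ f ∈ F, ∀ i, f i < (lams i).ord)
    (hdist : ∀ f ∈ F, ∀ g ∈ F, f ≠ g → {i | f i = g i} ∈ J)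
    (θ : Cardinal.{0})
    (hθ : Cardinal.lift.{1,0} θ ≤ #F)
    (hcof : 2 ^ #ι < θ.ord.cof) :
    ∃ g' : ι → Ordinal.{0},
      (∀ i, g' i ≤ (lams i).ord) ∧
      Cardinal.lift.{1,0} θ ≤ #{f | f ∈ F ∧ {i | g' i ≤ f i} ∈ J} ∧
      (∀ f' : ι → Ordinal.{0}, {i | g' i ≤ f' i} ∈ J →
        #{f | f ∈ F ∧ {i | f' i < f i} ∈ J} < Cardinal.lift.{1,0} θ) ∧
      ∃ h : Ordinal.{0} → ι → Ordinal.{0},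
        (∀ α < θ.ord, h α ∈ F ∧ {i | g' i ≤ h α i} ∈ J) ∧
        (∀ α β, α < β → β < θ.ord → ¬ ({i | h α i < h β i} ∈ J)) := by
  obtain ⟨hJ0, hJmono, -, hJuniv⟩ := hJ
  -- `J` is the dual ideal of `L`, so `f <_J g` reads `∀ᶠ i in L, f i < g i`.
  let L : Filter ι := .ofCountableUnion J (sUnion_mem_of_iUnion_mem hJ0 hcompl)
    fun t ht s hst => hJmono s t hst ht
  have hmemJ (p : ι → Prop) : {i | p i} ∈ J ↔ ∀ᶠ i in L, ¬ p i := by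
    simp [L, eventually_ofCountableUnion_iff]
  have : L.NeBot := ⟨fun h => hJuniv (by simpa [L] using (empty_mem_iff_bot.2 h : ∅ ∈ L))⟩
  have hFL : F.Pairwise fun f g => ∀ᶠ i in L, f i ≠ g i := fun f hf g hg hfg =>
    (hmemJ _).1 (hdist f hf g hg hfg)
  have hθ' : ℵ₀ ≤ lift.{1} θ := by simpa using aleph0_le_of_two_power_lt_cof hcof
  have hcof' : lift.{1} (2 ^ #ι) < (lift.{1} θ).ord.cof := by
    rwa [← lift_ord, ← Ordinal.lift_cof, lift_lt]
  obtain ⟨g, hg_top, hg_card, hg_few⟩ := exists_tight_bound hFL hθ' hcof'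
    (fun i => (lams i).ord)
    (by rwa [sep_eq_self_iff_mem_true.2 fun f hf => Eventually.of_forall (hF f hf)])
  obtain ⟨e, he⟩ := exists_embedding_Iio_ord_not_eventually_le (hFL.mono (sep_subset F _)) θ
    (by simpa using hg_card)
  refine ⟨g, hg_top, ?_, ?_, fun α => if hα : α < θ.ord then e ⟨α, hα⟩ else g, ?_, ?_⟩
  · simpa only [hmemJ, not_le] using hg_card
  · intro f' hf'
    have hf'L : ∀ᶠ i in L, f' i < g i := by simpa only [not_le] using (hmemJ _).1 hf'
    simpa only [hmemJ, not_le, not_lt] using hg_few f' hf'L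
  · intro α hα
    simpa only [dif_pos hα, mem_ofPred_eq, hmemJ, not_le] using (e ⟨α, hα⟩).2
  · intro α β hαβ hβ
    have hα := hαβ.trans hβ
    simpa only [dif_pos hβ, dif_pos hα, hmemJ, not_lt] using he ⟨α, hα⟩ ⟨β, hβ⟩ hαβ
end
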